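/- arXiv:2004.08621 — 4 statements merged into one kernel-verified Lean document; each statement's English description precedes it below -/
import Mathlib

section
/- Let M be a complete connected Riemannian manifold, f : M → ℝ a 1-Lipschitz function, γ a transport line (a transport curve defined on all of ℝ, hence a complete minimizing geodesic) of f, and x a point on γ. Then for any y ∈ M, y lies on γ if and only if |f(y) - f(x)| = d(x, y). -/
/-!
If `f(y) - f(x) = d(x, y)` with `x = γ t₀`, then for the point `a = γ (t₀ - 1)` behind `x` the
1-Lipschitz bound forces `d(a, y) = d(a, x) + d(x, y)`, exactly as for the point `γ (t₀ + d(x, y))`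
of the line. Non-branching of minimizing geodesics at `x` identifies the two points. The case
`f(y) - f(x) = -d(x, y)` is the same statement for `-f` and the reversed line `t ↦ γ (-t)`.
-/

section TransportLine

variable {M : Type*} [MetricSpace M]

lemma dist_eq_dist_add_dist_of_lipschitzWith_one {f : M → ℝ} (hf : LipschitzWith 1 f)
    {a x y : M} (hax : f x - f a = dist a x) (hxy : f y - f x = dist x y) :
    dist a y = dist a x + dist x y := by
  refine le_antisymm (dist_triangle a x y) ?_
  have hlip : |f a - f y| ≤ dist a y := by
    simpa [Real.dist_eq] using hf.dist_le_mul a y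
  linarith [neg_abs_le (f a - f y)]

lemma sub_eq_dist_of_le {f : M → ℝ} {γ : ℝ → M}
    (hgeo : ∀ s t : ℝ, dist (γ s) (γ t) = |s - t|)
    (htrans : ∀ s t : ℝ, f (γ t) - f (γ s) = t - s) {s t : ℝ} (hst : s ≤ t) :
    f (γ t) - f (γ s) = dist (γ s) (γ t) := by
  rw [htrans, hgeo, abs_sub_comm, abs_of_nonneg (sub_nonneg.mpr hst)]

lemma eq_of_sub_eq_dist_of_transport_line
    (hnb : ∀ a x b c : M, dist a b = dist a x + dist x b →
      dist a c = dist a x + dist x c → dist x b = dist x c → 0 < dist a x → b = c)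
    {f : M → ℝ} (hf : LipschitzWith 1 f) {γ : ℝ → M}
    (hgeo : ∀ s t : ℝ, dist (γ s) (γ t) = |s - t|)
    (htrans : ∀ s t : ℝ, f (γ t) - f (γ s) = t - s) (t₀ : ℝ) {y : M}
    (hy : f y - f (γ t₀) = dist (γ t₀) y) :
    γ (t₀ + dist (γ t₀) y) = y := by
  set r := dist (γ t₀) y
  have hbehind : f (γ t₀) - f (γ (t₀ - 1)) = dist (γ (t₀ - 1)) (γ t₀) :=
    sub_eq_dist_of_le hgeo htrans (by linarith)
  have hahead : f (γ (t₀ + r)) - f (γ t₀) = dist (γ t₀) (γ (t₀ + r)) :=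
    sub_eq_dist_of_le hgeo htrans (le_add_of_nonneg_right dist_nonneg)
  have hdist : dist (γ t₀) (γ (t₀ + r)) = r := by
    rw [hgeo, abs_sub_comm, add_sub_cancel_left, abs_of_nonneg dist_nonneg]
  refine hnb _ (γ t₀) _ _ (dist_eq_dist_add_dist_of_lipschitzWith_one hf hbehind hahead)
    (dist_eq_dist_add_dist_of_lipschitzWith_one hf hbehind hy) hdist ?_
  rw [hgeo]
  norm_num

end TransportLine

theorem mem_transport_line_iff_general
    {M : Type*} [MetricSpace M]
    (hnb : ∀ a x b c : M, dist a b = dist a x + dist x b →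
      dist a c = dist a x + dist x c → dist x b = dist x c → 0 < dist a x → b = c)
    (f : M → ℝ) (hf : LipschitzWith 1 f)
    (γ : ℝ → M)
    (hgeo : ∀ s t : ℝ, dist (γ s) (γ t) = |s - t|)
    (htrans : ∀ s t : ℝ, f (γ t) - f (γ s) = t - s)
    (t₀ : ℝ) (x : M) (hx : γ t₀ = x) :
    ∀ y : M, (∃ t : ℝ, γ t = y) ↔ |f y - f x| = dist x y := by
  subst hx
  intro y
  constructor
  · rintro ⟨t, rfl⟩
    rw [htrans, hgeo, abs_sub_comm]
  · intro h
    rcases abs_choice (f y - f (γ t₀)) with hpos | hneg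
    · exact ⟨_, eq_of_sub_eq_dist_of_transport_line hnb hf hgeo htrans t₀ (hpos ▸ h)⟩
    · have hgeo' : ∀ s t : ℝ, dist (γ (-s)) (γ (-t)) = |s - t| := fun s t => by
        rw [hgeo, ← abs_neg]; ring_nf
      have htrans' : ∀ s t : ℝ, -f (γ (-t)) - -f (γ (-s)) = t - s := fun s t => by
        linarith [htrans (-s) (-t)]
      exact ⟨_, eq_of_sub_eq_dist_of_transport_line (f := fun z => -f z) (γ := fun t => γ (-t))
        hnb hf.neg hgeo' htrans' (-t₀) (by simp only [neg_neg]; linarith)⟩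

theorem mem_transport_line_iff
    {M : Type*} [MetricSpace M] [CompleteSpace M] [ConnectedSpace M]
    (hnb : ∀ a x b c : M, dist a b = dist a x + dist x b →
      dist a c = dist a x + dist x c → dist x b = dist x c → 0 < dist a x → b = c)
    (f : M → ℝ) (hf : LipschitzWith 1 f)
    (γ : ℝ → M)
    (hgeo : ∀ s t : ℝ, dist (γ s) (γ t) = |s - t|)
    (htrans : ∀ s t : ℝ, f (γ t) - f (γ s) = t - s)
    (t₀ : ℝ) (x : M) (hx : γ t₀ = x) :
    ∀ y : M, (∃ t : ℝ, γ t = y) ↔ |f y - f x| = dist x y :=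
  mem_transport_line_iff_general hnb f hf γ hgeo htrans t₀ x hx
end

section
/- Let M be a complete connected Riemannian manifold and f : M → ℝ a 1-Lipschitz function. If γ₁ is a transport line of f and γ₂ is a transport curve of f with γ₁ ∩ γ₂ ≠ ∅, then the image of γ₂ is contained in the image of γ₁. In particular two transport lines of f that intersect must coincide. -/
/-!
Along a transport curve the increment of `f` equals the distance travelled, so `γ₂` moves away
from a common point `γ₁ s₀` isometrically. If `f c - f (γ₁ s₀) = dist (γ₁ s₀) c = r`, then `f`
increases by `1 + r` from `a = γ₁ (s₀ - 1)` to `c`, so `dist a c = 1 + r`: both `c` and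
`γ₁ (s₀ + r)` lie on minimizing segments from `a` through `γ₁ s₀`, at the same distance `r` beyond
it, and non-branching forces `c = γ₁ (s₀ + r)`. Points behind `γ₁ s₀` are handled by the same
argument for `-f` and the reversed line.
-/

open Set

theorem LipschitzWith.sub_le_dist {X : Type*} [PseudoMetricSpace X] {f : X → ℝ}
    (hf : LipschitzWith 1 f) (x y : X) : f y - f x ≤ dist x y := by
  have h := hf.le_add_mul y x
  rw [NNReal.coe_one, one_mul, dist_comm] at h
  linarith

def NonBranching (X : Type*) [PseudoMetricSpace X] : Prop :=
  ∀ a x b c : X, dist a b = dist a x + dist x b →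
    dist a c = dist a x + dist x c → dist x b = dist x c → 0 < dist a x → b = c

section TransportCurve

variable {X : Type*} [PseudoMetricSpace X] {f : X → ℝ}

theorem dist_eq_abs_sub_of_transport (hf : LipschitzWith 1 f) {I : Set ℝ} {γ : ℝ → X}
    (hspeed : ∀ s ∈ I, ∀ t ∈ I, dist (γ s) (γ t) ≤ |s - t|)
    (htrans : ∀ s ∈ I, ∀ t ∈ I, f (γ t) - f (γ s) = t - s) {s t : ℝ} (hs : s ∈ I) (ht : t ∈ I) :
    dist (γ s) (γ t) = |t - s| := by
  refine le_antisymm (abs_sub_comm s t ▸ hspeed s hs t ht) (abs_sub_le_iff.2 ⟨?_, ?_⟩)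
  · exact htrans s hs t ht ▸ hf.sub_le_dist _ _
  · exact dist_comm (γ s) (γ t) ▸ htrans t ht s hs ▸ hf.sub_le_dist _ _

variable (hnb : NonBranching X) (hf : LipschitzWith 1 f) {γ : ℝ → X}
  (hgeo : ∀ s t, dist (γ s) (γ t) = |s - t|) (htrans : ∀ s t, f (γ t) - f (γ s) = t - s)
include hnb hf hgeo htrans

theorem eq_apply_add_of_sub_eq_dist {s₀ : ℝ} {c : X} (hc : f c - f (γ s₀) = dist (γ s₀) c) :
    c = γ (s₀ + dist (γ s₀) c) := by
  set r := dist (γ s₀) c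
  have hr₀ : 0 ≤ r := dist_nonneg
  have hax : dist (γ (s₀ - 1)) (γ s₀) = 1 := by rw [hgeo]; norm_num
  have hxb : dist (γ s₀) (γ (s₀ + r)) = r := by
    rw [hgeo, sub_add_cancel_left, abs_neg, abs_of_nonneg hr₀]
  have hab : dist (γ (s₀ - 1)) (γ (s₀ + r)) = 1 + r := by
    rw [hgeo, show s₀ - 1 - (s₀ + r) = -(1 + r) by ring, abs_neg, abs_of_nonneg (by linarith)]
  have hac : dist (γ (s₀ - 1)) c = 1 + r := by
    refine le_antisymm ((dist_triangle _ (γ s₀) c).trans_eq (by rw [hax])) ?_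
    have h := hf.sub_le_dist (γ (s₀ - 1)) c
    have h₁ := htrans (s₀ - 1) s₀
    linarith
  exact (hnb _ (γ s₀) _ c (by rw [hab, hax, hxb]) (by rw [hac, hax]) (by rw [hxb])
    (by rw [hax]; norm_num)).symm

theorem eq_apply_add_of_dist_eq_abs_sub {s₀ : ℝ} {c : X}
    (hc : dist (γ s₀) c = |f c - f (γ s₀)|) : c = γ (s₀ + (f c - f (γ s₀))) := by
  rcases le_total 0 (f c - f (γ s₀)) with h | h
  · rw [abs_of_nonneg h] at hc
    have key := eq_apply_add_of_sub_eq_dist hnb hf hgeo htrans hc.symm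
    rwa [hc] at key
  · have key := eq_apply_add_of_sub_eq_dist (f := -f) (γ := fun s ↦ γ (-s)) (s₀ := -s₀) hnb hf.neg
      (fun s t ↦ by rw [hgeo, neg_sub_neg, abs_sub_comm])
      (fun s t ↦ by simp only [Pi.neg_apply]; linarith [htrans (-t) (-s)])
      (by simp only [neg_neg, Pi.neg_apply]; rw [hc, abs_of_nonpos h]; ring)
    simp only [neg_neg, hc, abs_of_nonpos h] at key
    rwa [show -(-s₀ + -(f c - f (γ s₀))) = s₀ + (f c - f (γ s₀)) by ring] at key

end TransportCurve

theorem transport_curve_subset_transport_line_general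
    {M : Type*} [MetricSpace M]
    (hnb : ∀ a x b c : M, dist a b = dist a x + dist x b →
      dist a c = dist a x + dist x c → dist x b = dist x c → 0 < dist a x → b = c)
    (f : M → ℝ) (hf : LipschitzWith 1 f)
    (γ₁ : ℝ → M)
    (hgeo₁ : ∀ s t : ℝ, dist (γ₁ s) (γ₁ t) = |s - t|)
    (htrans₁ : ∀ s t : ℝ, f (γ₁ t) - f (γ₁ s) = t - s)
    (I : Set ℝ) (γ₂ : ℝ → M)
    (hspeed₂ : ∀ s ∈ I, ∀ t ∈ I, dist (γ₂ s) (γ₂ t) ≤ |s - t|)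
    (htrans₂ : ∀ s ∈ I, ∀ t ∈ I, f (γ₂ t) - f (γ₂ s) = t - s)
    (hint : (Set.range γ₁ ∩ γ₂ '' I).Nonempty) :
    γ₂ '' I ⊆ Set.range γ₁ ∧ (I = Set.univ → Set.range γ₂ = Set.range γ₁) := by
  obtain ⟨_, ⟨s₀, hs₀⟩, t₀, ht₀, ht₀s₀⟩ := hint
  have hcross : γ₁ s₀ = γ₂ t₀ := hs₀.trans ht₀s₀.symm
  have hon_line : ∀ t ∈ I, γ₂ t = γ₁ (s₀ + (t - t₀)) := fun t ht ↦ by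
    have h := eq_apply_add_of_dist_eq_abs_sub hnb hf hgeo₁ htrans₁ (s₀ := s₀) (c := γ₂ t)
      (by rw [hcross, htrans₂ t₀ ht₀ t ht]
          exact dist_eq_abs_sub_of_transport hf hspeed₂ htrans₂ ht₀ ht)
    rwa [hcross, htrans₂ t₀ ht₀ t ht] at h
  refine ⟨?_, fun hI ↦ ?_⟩
  · rintro _ ⟨t, ht, rfl⟩
    exact ⟨_, (hon_line t ht).symm⟩
  · subst hI
    have hcomp : γ₂ = γ₁ ∘ (· + (s₀ - t₀)) :=
      funext fun t ↦ (hon_line t (mem_univ t)).trans (congrArg γ₁ (by ring))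
    rw [hcomp]
    exact (Equiv.addRight (s₀ - t₀)).surjective.range_comp γ₁

theorem transport_curve_subset_transport_line
    {M : Type*} [MetricSpace M] [CompleteSpace M] [ConnectedSpace M]
    (hnb : ∀ a x b c : M, dist a b = dist a x + dist x b →
      dist a c = dist a x + dist x c → dist x b = dist x c → 0 < dist a x → b = c)
    (f : M → ℝ) (hf : LipschitzWith 1 f)
    (γ₁ : ℝ → M)
    (hgeo₁ : ∀ s t : ℝ, dist (γ₁ s) (γ₁ t) = |s - t|)
    (htrans₁ : ∀ s t : ℝ, f (γ₁ t) - f (γ₁ s) = t - s)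
    (I : Set ℝ) (hI : I.OrdConnected) (γ₂ : ℝ → M)
    (hspeed₂ : ∀ s ∈ I, ∀ t ∈ I, dist (γ₂ s) (γ₂ t) ≤ |s - t|)
    (htrans₂ : ∀ s ∈ I, ∀ t ∈ I, f (γ₂ t) - f (γ₂ s) = t - s)
    (hint : (Set.range γ₁ ∩ γ₂ '' I).Nonempty) :
    γ₂ '' I ⊆ Set.range γ₁ ∧ (I = Set.univ → Set.range γ₂ = Set.range γ₁) :=
  transport_curve_subset_transport_line_general hnb f hf γ₁ hgeo₁ htrans₁ I γ₂ hspeed₂ htrans₂ hint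
end

section
/- Let M be a complete connected Riemannian manifold, (y_m) a sequence in M tending to infinity, and C_m real numbers; set f_m(x) = C_m - d(x, y_m) and assume f_m → f pointwise. If the cut-locus of y_m is empty for every m, then f induces a foliation by transport lines: through every point x ∈ M there passes a transport line of f (a complete minimizing geodesic along which f grows with unit speed). -/
open Filter Metric Topology

/-!
Fix `x` and let `γ_m` be the minimizing geodesic through `x` ending at `y_m`, isometric on
`(-∞, d(x, y_m)]`. Since `d(x, y_m) → ∞`, each point `γ_m t` eventually lies in the compact ball
of radius `|t|` about `x`, so along an ultrafilter refining `atTop` the curves converge pointwise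
to some `g`, and `g` is isometric on all of `ℝ`. Along `γ_m` the function `f_m` grows exactly with
unit speed, `f_m (γ_m t) = C_m - d(x, y_m) + t`, so in the limit `f (g t) - t` is the same number
`lim (C_m - d(x, y_m))` for every `t`.
-/

section RayLimits

variable {ι M : Type*} [PseudoMetricSpace M] {l : Filter ι}

theorem Ultrafilter.exists_tendsto_of_eventually_mem_closedBall [ProperSpace M]
    (U : Ultrafilter ι) {u : ι → M} {x : M} {r : ℝ} (h : ∀ᶠ i in U, u i ∈ closedBall x r) :
    ∃ a, Tendsto u U (𝓝 a) := by
  obtain ⟨a, -, ha⟩ := (isCompact_closedBall x r).ultrafilter_le_nhds (U.map u)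
    (by rwa [Ultrafilter.coe_map, le_principal_iff])
  exact ⟨a, ha⟩

theorem Filter.Tendsto.const_sub_dist_of_tendsto {C : ι → ℝ} {y u : ι → M} {a : M} {c : ℝ}
    (hC : Tendsto (fun i => C i - dist a (y i)) l (𝓝 c)) (hu : Tendsto u l (𝓝 a)) :
    Tendsto (fun i => C i - dist (u i) (y i)) l (𝓝 c) := by
  have hua : Tendsto (fun i => dist a (u i)) l (𝓝 0) := by
    simpa using (tendsto_const_nhds (x := a)).dist hu
  have hdiff : Tendsto (fun i => dist a (y i) - dist (u i) (y i)) l (𝓝 0) :=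
    squeeze_zero_norm (fun i => abs_dist_sub_le a (u i) (y i)) hua
  simpa using (hC.add hdiff).congr fun i => by ring

variable {γ : ι → ℝ → M} {R : ι → ℝ}

theorem Ultrafilter.exists_forall_tendsto_of_rays [ProperSpace M] (U : Ultrafilter ι) {x : M}
    (hR : Tendsto R U atTop)
    (hγ : ∀ i s t, s ≤ R i → t ≤ R i → dist (γ i s) (γ i t) = |s - t|)
    (h0 : ∀ i, γ i 0 = x) :
    ∃ g : ℝ → M, ∀ t, Tendsto (fun i => γ i t) U (𝓝 (g t)) := by
  have hball (t : ℝ) : ∀ᶠ i in U, γ i t ∈ closedBall x |t| := by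
    filter_upwards [hR.eventually_ge_atTop t, hR.eventually_ge_atTop 0] with i ht h0R
    rw [mem_closedBall, ← h0 i, hγ i t 0 ht h0R, sub_zero]
  choose g hg using fun t => U.exists_tendsto_of_eventually_mem_closedBall (hball t)
  exact ⟨g, hg⟩

variable [l.NeBot] {g : ℝ → M}

theorem dist_eq_abs_sub_of_tendsto_rays (hR : Tendsto R l atTop)
    (hγ : ∀ i s t, s ≤ R i → t ≤ R i → dist (γ i s) (γ i t) = |s - t|)
    (hg : ∀ t, Tendsto (fun i => γ i t) l (𝓝 (g t))) (s t : ℝ) :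
    dist (g s) (g t) = |s - t| := by
  refine tendsto_nhds_unique ((hg s).dist (hg t)) (tendsto_const_nhds.congr' ?_)
  filter_upwards [hR.eventually_ge_atTop s, hR.eventually_ge_atTop t] with i hs ht
  exact (hγ i s t hs ht).symm

theorem sub_eq_sub_of_tendsto_rays {y : ι → M} {C : ι → ℝ} {f : M → ℝ}
    (hR : Tendsto R l atTop)
    (hγ : ∀ i s t, s ≤ R i → t ≤ R i → dist (γ i s) (γ i t) = |s - t|)
    (hend : ∀ i, γ i (R i) = y i)
    (hf : ∀ z, Tendsto (fun i => C i - dist z (y i)) l (𝓝 (f z)))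
    (hg : ∀ t, Tendsto (fun i => γ i t) l (𝓝 (g t))) (s t : ℝ) :
    f (g t) - f (g s) = t - s := by
  have hlim (t : ℝ) : Tendsto (fun i => C i - R i) l (𝓝 (f (g t) - t)) := by
    refine ((hf (g t)).const_sub_dist_of_tendsto (hg t)).sub_const t |>.congr' ?_
    filter_upwards [hR.eventually_ge_atTop t] with i ht
    have hdist : dist (γ i t) (y i) = R i - t := by
      rw [← hend i, hγ i t (R i) ht le_rfl, abs_of_nonpos (by linarith)]
      ring
    rw [hdist]
    ring
  linarith [tendsto_nhds_unique (hlim t) (hlim s)]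

end RayLimits

theorem foliation_from_empty_cut_locus_general
    {M : Type*} [MetricSpace M] [ProperSpace M]
    (y : ℕ → M) (hy : Tendsto y atTop (Filter.cocompact M))
    (C : ℕ → ℝ) (f : M → ℝ)
    (hf : ∀ x : M, Tendsto (fun m => C m - dist x (y m)) atTop (nhds (f x)))
    (hcut : ∀ m : ℕ, ∀ x : M, ∃ γ : ℝ → M, γ 0 = x ∧ γ (dist x (y m)) = y m ∧
      ∀ s t : ℝ, s ≤ dist x (y m) → t ≤ dist x (y m) →
        dist (γ s) (γ t) = |s - t|) :
    ∀ x : M, ∃ γ : ℝ → M, γ 0 = x ∧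
      (∀ s t : ℝ, dist (γ s) (γ t) = |s - t|) ∧
      (∀ s t : ℝ, f (γ t) - f (γ s) = t - s) := by
  intro x
  choose γ hγ0 hγend hγ using fun m => hcut m x
  set U : Ultrafilter ℕ := Ultrafilter.of atTop
  have hU : (U : Filter ℕ) ≤ atTop := Ultrafilter.of_le _
  have hR : Tendsto (fun m => dist x (y m)) U atTop :=
    ((tendsto_dist_left_cocompact_atTop x).comp hy).mono_left hU
  obtain ⟨g, hg⟩ := U.exists_forall_tendsto_of_rays hR hγ hγ0
  refine ⟨g, tendsto_nhds_unique (hg 0) ?_, dist_eq_abs_sub_of_tendsto_rays hR hγ hg,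
    sub_eq_sub_of_tendsto_rays hR hγ hγend (fun z => (hf z).mono_left hU) hg⟩
  simpa only [hγ0] using tendsto_const_nhds

theorem foliation_from_empty_cut_locus
    {M : Type*} [MetricSpace M] [ProperSpace M] [ConnectedSpace M]
    (y : ℕ → M) (hy : Tendsto y atTop (Filter.cocompact M))
    (C : ℕ → ℝ) (f : M → ℝ)
    (hf : ∀ x : M, Tendsto (fun m => C m - dist x (y m)) atTop (nhds (f x)))
    (hcut : ∀ m : ℕ, ∀ x : M, ∃ γ : ℝ → M, γ 0 = x ∧ γ (dist x (y m)) = y m ∧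
      ∀ s t : ℝ, s ≤ dist x (y m) → t ≤ dist x (y m) →
        dist (γ s) (γ t) = |s - t|) :
    ∀ x : M, ∃ γ : ℝ → M, γ 0 = x ∧
      (∀ s t : ℝ, dist (γ s) (γ t) = |s - t|) ∧
      (∀ s t : ℝ, f (γ t) - f (γ s) = t - s) :=
  foliation_from_empty_cut_locus_general y hy C f hf hcut
end

section
/- Let (d_m) be a sequence of metrics on ℝ², each inducing the standard topology, such that d_m(x,y) → |x - y| locally uniformly in x, y. For each m, let [x,y]_m denote a minimizing d_m-geodesic segment between x and y (assumed to exist and be unique). Then [x,y]_m converges to the Euclidean segment [x,y] in the Hausdorff metric, locally uniformly in x, y: the point on [x,y]_m at d_m-distance λ·d_m(x,y) from x converges to x + λ(y - x), uniformly in λ ∈ [0,1]. -/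
/-!
Fix `m` large. A `d_m`-geodesic from `x` to `y` has `d_m`-length `d_m(x, y) ≈ |x - y|`, so by
continuity it cannot reach the sphere of radius `3R₀ + 2` around the origin when `|x|, |y| ≤ R₀`:
there `d_m(x, ·) > d_m(x, y)`. Hence the point `z` at parameter `λ d_m(x, y)` lies in a fixed
compact ball on which `d_m` is `δ`-close to the Euclidean distance, so
`|x - z| ≤ λ|x - y| + 2δ` and `|z - y| ≤ (1 - λ)|x - y| + 2δ`. In a Euclidean space these
almost-equalities in the triangle inequality force `z` to be `O(√δ)`-close to `x + λ(y - x)`.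
-/

open Set Metric

section Premetric

variable {X : Type*} {d : X → X → ℝ}

lemma nonneg_of_symm_of_triangle (hsymm : ∀ x y, d x y = d y x) (hself : ∀ x, d x x = 0)
    (htri : ∀ x y z, d x z ≤ d x y + d y z) (x y : X) : 0 ≤ d x y := by
  have h := htri x y x
  rw [hself, hsymm y x] at h
  linarith

def IsIsometricOn (d : X → X → ℝ) (γ : ℝ → X) (S : Set ℝ) : Prop :=
  ∀ s ∈ S, ∀ t ∈ S, d (γ s) (γ t) = |s - t|

namespace IsIsometricOn

variable {γ : ℝ → X} {x y : X} {L t : ℝ}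

lemma continuousOn [TopologicalSpace X]
    (htop : ∀ s : Set X, IsOpen s ↔ ∀ x ∈ s, ∃ ε > 0, ∀ y, d x y < ε → y ∈ s)
    {S : Set ℝ} (hγ : IsIsometricOn d γ S) : ContinuousOn γ S := by
  intro t ht
  refine (nhds_basis_opens (γ t)).tendsto_right_iff.2 fun V ⟨hγV, hV⟩ => ?_
  obtain ⟨ε, hε, hball⟩ := (htop V).1 hV _ hγV
  refine mem_nhdsWithin_iff.2 ⟨ε, hε, fun s ⟨hs, hsS⟩ => hball _ ?_⟩
  rwa [hγ t ht s hsS, abs_sub_comm, ← Real.dist_eq]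

lemma dist_start_eq (hγ : IsIsometricOn d γ (Icc 0 L)) (hγ0 : γ 0 = x) (ht : t ∈ Icc 0 L) :
    d x (γ t) = t := by
  rw [← hγ0, hγ 0 (left_mem_Icc.2 (ht.1.trans ht.2)) t ht, zero_sub, abs_neg,
    abs_of_nonneg ht.1]

lemma dist_end_eq (hγ : IsIsometricOn d γ (Icc 0 L)) (hγL : γ L = y) (ht : t ∈ Icc 0 L) :
    d (γ t) y = L - t := by
  rw [← hγL, hγ t ht L (right_mem_Icc.2 (ht.1.trans ht.2)), abs_sub_comm,
    abs_of_nonneg (sub_nonneg.2 ht.2)]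

end IsIsometricOn

end Premetric

lemma ContinuousOn.forall_lt_of_forall_ne {f : ℝ → ℝ} {a b c : ℝ}
    (hf : ContinuousOn f (Icc a b)) (ha : f a < c) (hne : ∀ t ∈ Icc a b, f t ≠ c) :
    ∀ t ∈ Icc a b, f t < c := by
  intro t ht
  by_contra! hle
  have hsub : Icc a t ⊆ Icc a b := Icc_subset_Icc le_rfl ht.2
  obtain ⟨s, hs, hsc⟩ := intermediate_value_Icc ht.1 (hf.mono hsub) ⟨ha.le, hle⟩
  exact hne s (hsub hs) hsc

section Euclidean

variable {E : Type*} [NormedAddCommGroup E] [InnerProductSpace ℝ E]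

lemma dist_add_smul_sub_sq_le {x y z : E} {lam δ : ℝ} (hlam : lam ∈ Icc (0 : ℝ) 1)
    (hδ : 0 ≤ δ) (hxz : dist x z ≤ lam * dist x y + δ)
    (hzy : dist z y ≤ (1 - lam) * dist x y + δ) :
    dist z (x + lam • (y - x)) ^ 2 ≤ δ * (dist x y + δ) := by
  set u := z - x
  set v := y - z
  have hdiff : z - (x + lam • (y - x)) = (1 - lam) • u - lam • v := by
    simp only [u, v, sub_smul, one_smul, smul_sub]
    abel
  have hsum : y - x = u + v := by simp only [u, v]; abel
  -- Stewart's identity for the point dividing `u + v` in the ratio `lam : 1 - lam`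
  have stewart : ‖(1 - lam) • u - lam • v‖ ^ 2
      = (1 - lam) * ‖u‖ ^ 2 + lam * ‖v‖ ^ 2 - lam * (1 - lam) * ‖u + v‖ ^ 2 := by
    rw [norm_sub_sq_real, norm_add_sq_real, real_inner_smul_left, real_inner_smul_right,
      norm_smul, norm_smul, Real.norm_eq_abs, Real.norm_eq_abs, mul_pow, mul_pow, sq_abs,
      sq_abs]
    ring
  have hu : ‖u‖ ≤ lam * ‖u + v‖ + δ := by
    rw [← hsum]; simpa only [u, dist_eq_norm'] using hxz
  have hv : ‖v‖ ≤ (1 - lam) * ‖u + v‖ + δ := by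
    rw [← hsum]; simpa only [v, dist_eq_norm'] using hzy
  rw [dist_eq_norm, hdiff, stewart, dist_eq_norm', hsum]
  have hl : 0 ≤ 1 - lam := sub_nonneg.2 hlam.2
  nlinarith [norm_nonneg u, norm_nonneg v, norm_nonneg (u + v), mul_nonneg hl hlam.1,
    mul_le_mul_of_nonneg_left (pow_le_pow_left₀ (norm_nonneg u) hu 2) hl,
    mul_le_mul_of_nonneg_left (pow_le_pow_left₀ (norm_nonneg v) hv 2) hlam.1,
    sq_nonneg (2 * lam - 1), mul_nonneg (norm_nonneg (u + v)) hδ]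

end Euclidean

section AlmostEuclidean

variable {E : Type*} [NormedAddCommGroup E] {d : E → E → ℝ} {γ : ℝ → E} {x y : E} {δ R₀ : ℝ}

lemma IsIsometricOn.norm_lt_of_almost_dist
    (htop : ∀ s : Set E, IsOpen s ↔ ∀ x ∈ s, ∃ ε > 0, ∀ y, d x y < ε → y ∈ s)
    (hδ : δ ≤ 1) (hx : ‖x‖ ≤ R₀) (hy : ‖y‖ ≤ R₀)
    (happrox : ∀ a ∈ closedBall (0 : E) (3 * R₀ + 2), ∀ b ∈ closedBall (0 : E) (3 * R₀ + 2),
      |d a b - dist a b| < δ)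
    (hγ : IsIsometricOn d γ (Icc 0 (d x y))) (hγ0 : γ 0 = x) :
    ∀ t ∈ Icc 0 (d x y), ‖γ t‖ < 3 * R₀ + 2 := by
  have hR₀ : 0 ≤ R₀ := (norm_nonneg x).trans hx
  have hxB : x ∈ closedBall (0 : E) (3 * R₀ + 2) := mem_closedBall_zero_iff.2 (by linarith)
  have hyB : y ∈ closedBall (0 : E) (3 * R₀ + 2) := mem_closedBall_zero_iff.2 (by linarith)
  have hxy := abs_lt.1 (happrox x hxB y hyB)
  have hxy_le : dist x y ≤ 2 * R₀ := (dist_le_norm_add_norm x y).trans (by linarith)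
  refine (hγ.continuousOn htop).norm.forall_lt_of_forall_ne (by rw [hγ0]; linarith)
    fun t ht hsphere => ?_
  have hxw := abs_lt.1 (happrox x hxB (γ t) (mem_closedBall_zero_iff.2 hsphere.le))
  rw [hγ.dist_start_eq hγ0 ht] at hxw
  have hfar : ‖γ t‖ - ‖x‖ ≤ dist x (γ t) := by
    rw [dist_comm, dist_eq_norm]
    exact norm_sub_norm_le _ _
  linarith [ht.2]

lemma IsIsometricOn.dist_sq_le_of_almost_dist [InnerProductSpace ℝ E]
    (htop : ∀ s : Set E, IsOpen s ↔ ∀ x ∈ s, ∃ ε > 0, ∀ y, d x y < ε → y ∈ s)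
    (hδ : δ ≤ 1) (hx : ‖x‖ ≤ R₀) (hy : ‖y‖ ≤ R₀)
    (happrox : ∀ a ∈ closedBall (0 : E) (3 * R₀ + 2), ∀ b ∈ closedBall (0 : E) (3 * R₀ + 2),
      |d a b - dist a b| < δ)
    (hγ : IsIsometricOn d γ (Icc 0 (d x y))) (hγ0 : γ 0 = x) (hγ1 : γ (d x y) = y)
    (hd : 0 ≤ d x y) {lam : ℝ} (hlam : lam ∈ Icc (0 : ℝ) 1) :
    dist (γ (lam * d x y)) (x + lam • (y - x)) ^ 2 ≤ 4 * δ * (R₀ + 1) := by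
  have ht : lam * d x y ∈ Icc 0 (d x y) :=
    ⟨mul_nonneg hlam.1 hd, mul_le_of_le_one_left hd hlam.2⟩
  set z := γ (lam * d x y)
  have hR₀ : 0 ≤ R₀ := (norm_nonneg x).trans hx
  have mem : ∀ w : E, ‖w‖ ≤ R₀ → w ∈ closedBall (0 : E) (3 * R₀ + 2) :=
    fun w hw => mem_closedBall_zero_iff.2 (by linarith)
  have hzB : z ∈ closedBall (0 : E) (3 * R₀ + 2) :=
    mem_closedBall_zero_iff.2 (hγ.norm_lt_of_almost_dist htop hδ hx hy happrox hγ0 _ ht).le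
  have hxy := abs_lt.1 (happrox x (mem x hx) y (mem y hy))
  have hxz := abs_lt.1 (happrox x (mem x hx) z hzB)
  have hzy := abs_lt.1 (happrox z hzB y (mem y hy))
  rw [hγ.dist_start_eq hγ0 ht] at hxz
  rw [hγ.dist_end_eq hγ1 ht] at hzy
  have hδ0 : 0 ≤ δ := (abs_nonneg _).trans (happrox x (mem x hx) y (mem y hy)).le
  have hl : 0 ≤ 1 - lam := sub_nonneg.2 hlam.2
  have hlam_err : lam * d x y ≤ lam * dist x y + δ := by
    nlinarith [mul_le_mul_of_nonneg_left hxy.2.le hlam.1, mul_le_of_le_one_left hδ0 hlam.2]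
  have hlam_err' : (1 - lam) * d x y ≤ (1 - lam) * dist x y + δ := by
    nlinarith [mul_le_mul_of_nonneg_left hxy.2.le hl,
      mul_le_of_le_one_left hδ0 (sub_le_self 1 hlam.1)]
  have hsq := dist_add_smul_sub_sq_le (x := x) (y := y) (z := z) hlam
    (by positivity : 0 ≤ 2 * δ) (by linarith) (by linarith)
  have hxy_le : dist x y ≤ 2 * R₀ := (dist_le_norm_add_norm x y).trans (by linarith)
  nlinarith [mul_le_mul_of_nonneg_left hxy_le hδ0, mul_le_of_le_one_left hδ0 hδ]

end AlmostEuclidean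

theorem geodesics_converge_to_segments_general
    (d : ℕ → EuclideanSpace ℝ (Fin 2) → EuclideanSpace ℝ (Fin 2) → ℝ)
    (hsymm : ∀ m x y, d m x y = d m y x)
    (hzero : ∀ m x y, d m x y = 0 ↔ x = y)
    (htri : ∀ m x y z, d m x z ≤ d m x y + d m y z)
    (htop : ∀ (m : ℕ) (s : Set (EuclideanSpace ℝ (Fin 2))),
      IsOpen s ↔ ∀ x ∈ s, ∃ ε > 0, ∀ y, d m x y < ε → y ∈ s)
    (hconv : ∀ K : Set (EuclideanSpace ℝ (Fin 2) × EuclideanSpace ℝ (Fin 2)),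
      IsCompact K → ∀ ε > 0, ∃ N : ℕ, ∀ m ≥ N, ∀ p ∈ K,
        |d m p.1 p.2 - dist p.1 p.2| < ε)
    (γ : ℕ → EuclideanSpace ℝ (Fin 2) → EuclideanSpace ℝ (Fin 2) → ℝ →
      EuclideanSpace ℝ (Fin 2))
    (hgeo : ∀ m x y, γ m x y 0 = x ∧ γ m x y (d m x y) = y ∧
      ∀ s ∈ Icc 0 (d m x y), ∀ t ∈ Icc 0 (d m x y),
        d m (γ m x y s) (γ m x y t) = |s - t|) :
    ∀ K : Set (EuclideanSpace ℝ (Fin 2) × EuclideanSpace ℝ (Fin 2)),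
      IsCompact K → ∀ ε > 0, ∃ N : ℕ, ∀ m ≥ N, ∀ p ∈ K, ∀ lam ∈ Icc (0:ℝ) 1,
        dist (γ m p.1 p.2 (lam * d m p.1 p.2)) (p.1 + lam • (p.2 - p.1)) < ε := by
  intro K hK ε hε
  obtain ⟨R₀, hR₀, hK_le⟩ := hK.isBounded.exists_pos_norm_le
  set δ := min 1 (ε ^ 2 / (8 * (R₀ + 1)))
  have hδ : 0 < δ := lt_min one_pos (by positivity)
  have hδε : 4 * δ * (R₀ + 1) < ε ^ 2 := by
    have h := min_le_right 1 (ε ^ 2 / (8 * (R₀ + 1)))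
    rw [le_div_iff₀ (by positivity)] at h
    nlinarith
  obtain ⟨N, hN⟩ := hconv (closedBall 0 (3 * R₀ + 2) ×ˢ closedBall 0 (3 * R₀ + 2))
    ((isCompact_closedBall _ _).prod (isCompact_closedBall _ _)) δ hδ
  refine ⟨N, fun m hm p hp lam hlam => ?_⟩
  obtain ⟨hγ0, hγ1, hγ⟩ := hgeo m p.1 p.2
  have hd := nonneg_of_symm_of_triangle (hsymm m) (fun x => (hzero m x x).2 rfl) (htri m)
  have hsq := IsIsometricOn.dist_sq_le_of_almost_dist (htop m) (min_le_left _ _)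
    ((norm_fst_le p).trans (hK_le p hp)) ((norm_snd_le p).trans (hK_le p hp))
    (fun a ha b hb => hN m hm (a, b) ⟨ha, hb⟩) hγ hγ0 hγ1 (hd _ _) hlam
  exact lt_of_pow_lt_pow_left₀ 2 hε.le (hsq.trans_lt hδε)

theorem geodesics_converge_to_segments
    (d : ℕ → EuclideanSpace ℝ (Fin 2) → EuclideanSpace ℝ (Fin 2) → ℝ)
    (hsymm : ∀ m x y, d m x y = d m y x)
    (hzero : ∀ m x y, d m x y = 0 ↔ x = y)
    (htri : ∀ m x y z, d m x z ≤ d m x y + d m y z)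
    (htop : ∀ (m : ℕ) (s : Set (EuclideanSpace ℝ (Fin 2))),
      IsOpen s ↔ ∀ x ∈ s, ∃ ε > 0, ∀ y, d m x y < ε → y ∈ s)
    (hconv : ∀ K : Set (EuclideanSpace ℝ (Fin 2) × EuclideanSpace ℝ (Fin 2)),
      IsCompact K → ∀ ε > 0, ∃ N : ℕ, ∀ m ≥ N, ∀ p ∈ K,
        |d m p.1 p.2 - dist p.1 p.2| < ε)
    (γ : ℕ → EuclideanSpace ℝ (Fin 2) → EuclideanSpace ℝ (Fin 2) → ℝ →
      EuclideanSpace ℝ (Fin 2))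
    (hgeo : ∀ m x y, γ m x y 0 = x ∧ γ m x y (d m x y) = y ∧
      ∀ s ∈ Icc 0 (d m x y), ∀ t ∈ Icc 0 (d m x y),
        d m (γ m x y s) (γ m x y t) = |s - t|)
    (huniq : ∀ m x y (γ' : ℝ → EuclideanSpace ℝ (Fin 2)),
      γ' 0 = x → γ' (d m x y) = y →
      (∀ s ∈ Icc 0 (d m x y), ∀ t ∈ Icc 0 (d m x y), d m (γ' s) (γ' t) = |s - t|) →
      ∀ t ∈ Icc 0 (d m x y), γ' t = γ m x y t) :
    ∀ K : Set (EuclideanSpace ℝ (Fin 2) × EuclideanSpace ℝ (Fin 2)),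
      IsCompact K → ∀ ε > 0, ∃ N : ℕ, ∀ m ≥ N, ∀ p ∈ K, ∀ lam ∈ Icc (0:ℝ) 1,
        dist (γ m p.1 p.2 (lam * d m p.1 p.2)) (p.1 + lam • (p.2 - p.1)) < ε :=
  geodesics_converge_to_segments_general d hsymm hzero htri htop hconv γ hgeo
end
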